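/- Let A ⊆ ℝ^d be compact and t > 0. If x₁,…,x_J ∈ M_t(A) are points such that the open balls B(x_j, t) are pairwise disjoint, then the volume of A_t \ A is at least J · κ_lens · t^d, where κ_lens is the volume of the intersection of two unit balls whose centers are at distance 1. Here A_t denotes the closed t-neighborhood of A and M_t(A) is the set of boundary points admitting a normal direction with local reach greater than t. -/

import Mathlib

open Metric MeasureTheory Filter Set Topology
open scoped ENNReal

noncomputable section

/-- `uniqueNearest A y x` : `x` is the unique nearest point of `y` in `A`. -/
def uniqueNearest {d : ℕ} (A : Set (EuclideanSpace ℝ (Fin d)))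
    (y x : EuclideanSpace ℝ (Fin d)) : Prop :=
  x ∈ A ∧ dist y x = Metric.infDist y A ∧ ∀ a ∈ A, dist y a = Metric.infDist y A → a = x

/-- The local reach `δ(A,x,u)`. -/
def localReach {d : ℕ} (A : Set (EuclideanSpace ℝ (Fin d)))
    (x u : EuclideanSpace ℝ (Fin d)) : ℝ≥0∞ :=
  ⨆ (s : ℝ) (_ : 0 ≤ s ∧ uniqueNearest A (x + s • u) x), ENNReal.ofReal s

/-- `M_t(A)`. -/
def reachSet {d : ℕ} (A : Set (EuclideanSpace ℝ (Fin d))) (t : ℝ) :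
    Set (EuclideanSpace ℝ (Fin d)) :=
  {x | x ∈ frontier A ∧ ∃ u : EuclideanSpace ℝ (Fin d), ‖u‖ = 1 ∧
    ENNReal.ofReal t < localReach A x u}

/-! Each `x ∈ M_t(A)` comes with a unit vector `u` and some `s > t` such that `x` is the unique
nearest point of `x + s u` in `A`; then the open ball `B(x + s u, s)` misses `A`, hence so does
the smaller ball `B(x + t u, t)` inside it, and the lens `B(x, t) ∩ B(x + t u, t)` lies in
`A_t \ A`. By translation, scaling and a reflection taking `u` to `e₁`, each lens has volume
`κ_lens t^d`, and the lenses are disjoint because the balls `B(x_j, t)` are. -/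

open scoped Pointwise

section NormedSpace

variable {E : Type*} [NormedAddCommGroup E] [NormedSpace ℝ E]

theorem ball_inter_ball_eq_vadd_smul {t : ℝ} (ht : 0 < t) (c u : E) :
    ball c t ∩ ball (c + t • u) t = c +ᵥ t • (ball 0 1 ∩ ball u 1) := by
  rw [smul_set_inter₀ ht.ne', _root_.smul_ball ht.ne', _root_.smul_ball ht.ne',
    vadd_set_inter, vadd_ball, vadd_ball, smul_zero, Real.norm_eq_abs, abs_of_pos ht, mul_one,
    vadd_eq_add, add_zero, vadd_eq_add]

theorem disjoint_ball_of_le_infDist {A : Set E} {x u : E} (hu : ‖u‖ = 1) {s t : ℝ} (hts : t ≤ s)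
    (hs : s ≤ infDist (x + s • u) A) : Disjoint (ball (x + t • u) t) A := by
  refine Set.disjoint_left.mpr fun y hy hyA => ?_
  have hcenters : dist (x + s • u) (x + t • u) = s - t := by
    rw [dist_add_left, dist_eq_norm, ← sub_smul, norm_smul, hu, mul_one, Real.norm_eq_abs,
      abs_of_nonneg (sub_nonneg.mpr hts)]
  have := infDist_le_dist_of_mem (x := x + s • u) hyA
  have := dist_triangle (x + s • u) (x + t • u) y
  rw [mem_ball'] at hy
  linarith

end NormedSpace

section InnerProductSpace

variable {E : Type*} [NormedAddCommGroup E] [InnerProductSpace ℝ E] [FiniteDimensional ℝ E]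
  [MeasurableSpace E] [BorelSpace E]

theorem volume_ball_inter_ball_eq_of_norm_eq {u v : E} (h : ‖u‖ = ‖v‖) (r : ℝ) :
    volume (ball 0 r ∩ ball u r) = volume (ball 0 r ∩ ball v r) := by
  set R : E ≃ₗᵢ[ℝ] E := Submodule.reflection (ℝ ∙ (u - v))ᗮ
  have himage : R '' (ball 0 r ∩ ball u r) = ball 0 r ∩ ball v r := by
    rw [image_inter R.injective, R.image_ball, R.image_ball, map_zero,
      Submodule.reflection_sub h]
  rw [← himage, R.image_eq_preimage_symm,
    R.symm.measurePreserving.measure_preimage (isOpen_ball.inter isOpen_ball).nullMeasurableSet]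

theorem volume_lens {t : ℝ} (ht : 0 < t) (c : E) {u v : E} (h : ‖u‖ = ‖v‖) :
    volume (ball c t ∩ ball (c + t • u) t) =
      volume (ball 0 1 ∩ ball v 1) * ENNReal.ofReal (t ^ Module.finrank ℝ E) := by
  rw [ball_inter_ball_eq_vadd_smul ht, measure_vadd, Measure.addHaar_smul,
    volume_ball_inter_ball_eq_of_norm_eq h, abs_of_pos (pow_pos ht _), mul_comm]

end InnerProductSpace

theorem exists_lens_subset_of_mem_reachSet {d : ℕ} {A : Set (EuclideanSpace ℝ (Fin d))} {t : ℝ}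
    {x : EuclideanSpace ℝ (Fin d)} (hx : x ∈ reachSet A t) :
    ∃ u : EuclideanSpace ℝ (Fin d), ‖u‖ = 1 ∧
      ball x t ∩ ball (x + t • u) t ⊆ cthickening t A \ A := by
  obtain ⟨-, u, hu, hreach⟩ := hx
  obtain ⟨s, ⟨hs0, hxA, hdist, -⟩, hts⟩ : ∃ s, (0 ≤ s ∧ uniqueNearest A (x + s • u) x) ∧
      ENNReal.ofReal t < ENNReal.ofReal s := by
    simpa only [localReach, lt_iSup_iff, exists_prop] using hreach
  have hinfDist : infDist (x + s • u) A = s := by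
    rw [← hdist, dist_self_add_left, norm_smul, hu, mul_one, Real.norm_eq_abs, abs_of_nonneg hs0]
  have hdisj := disjoint_ball_of_le_infDist hu ((ENNReal.ofReal_lt_ofReal_iff'.mp hts).1.le)
    hinfDist.ge
  exact ⟨u, hu, fun y ⟨hyx, hyu⟩ =>
    ⟨mem_cthickening_of_dist_le y x t A hxA (mem_ball.mp hyx).le, hdisj.notMem_of_mem_left hyu⟩⟩

theorem volume_lower_bound_of_packing (d J : ℕ) (hd : 0 < d)
    (A : Set (EuclideanSpace ℝ (Fin d)))
    (t : ℝ) (ht : 0 < t) (x : Fin J → EuclideanSpace ℝ (Fin d))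
    (hx : ∀ j, x j ∈ reachSet A t)
    (hdisj : Pairwise fun i j => Disjoint (Metric.ball (x i) t) (Metric.ball (x j) t)) :
    (J : ℝ≥0∞) *
        volume (Metric.ball (0 : EuclideanSpace ℝ (Fin d)) 1 ∩
          Metric.ball (EuclideanSpace.single (⟨0, hd⟩ : Fin d) (1 : ℝ)) 1) *
        ENNReal.ofReal (t ^ d) ≤
      volume (Metric.cthickening t A \ A) := by
  choose u hu hlens using fun j => exists_lens_subset_of_mem_reachSet (hx j)
  set lens := fun j => ball (x j) t ∩ ball (x j + t • u j) t
  have hvolume (j : Fin J) : volume (lens j) =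
      volume (ball (0 : EuclideanSpace ℝ (Fin d)) 1 ∩
        ball (EuclideanSpace.single (⟨0, hd⟩ : Fin d) (1 : ℝ)) 1) * ENNReal.ofReal (t ^ d) := by
    rw [volume_lens ht _ (v := EuclideanSpace.single _ 1) (by simp [hu j]),
      finrank_euclideanSpace_fin]
  calc _ = ∑' j, volume (lens j) := by simp [hvolume, mul_assoc]
    _ ≤ volume (⋃ j, lens j) := tsum_meas_le_meas_iUnion_of_disjoint _
        (fun j => (isOpen_ball.inter isOpen_ball).measurableSet)
        (fun i j hij => (hdisj hij).mono inter_subset_left inter_subset_left)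
    _ ≤ _ := measure_mono (iUnion_subset hlens)
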